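/- arXiv:math/0611254 — 3 statements merged into one kernel-verified Lean document; each statement's English description precedes it below -/
import Mathlib

section
/- Let v, φ : ℝ → ℝ be smooth, positive and 2π-periodic, and let ψ : ℝ → ℝ be any C⁴ 2π-periodic function. With g₁ = v^{-4/3}g_s and g₂ = φ^{-4/3}g₁ = (φv)^{-4/3}g_s, the following conformal covariance identities hold pointwise: (i) Q^A_{g₂} = φ^{5/3}·P^A_{g₁}φ, i.e. (1/9)(vφ)^{5/3}·((vφ)'''' + 10(vφ)'' + 9vφ) = φ^{5/3}·( (1/9)Δ_{g₁}(Δ_{g₁}φ) + (10/9)∇_{g₁}(κ_{g₁}·∇_{g₁}φ) + Q^A_{g₁}·φ ); (ii) P^A_{g₂}ψ = φ^{5/3}·P^A_{g₁}(ψφ). -/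
set_option maxHeartbeats 4000000

open Real

/-- For `g = v^{-4/3} g_s`: the gradient `∇_g f = v^{2/3} f'`. -/
noncomputable def gradOp (v f : ℝ → ℝ) : ℝ → ℝ :=
  fun θ => (v θ) ^ ((2 : ℝ)/3) * deriv f θ

/-- For `g = v^{-4/3} g_s`: the Laplacian `Δ_g f = v^{4/3} f'' + (2/3) v^{1/3} v' f'`. -/
noncomputable def lapOp (v f : ℝ → ℝ) : ℝ → ℝ :=
  fun θ => (v θ) ^ ((4 : ℝ)/3) * iteratedDeriv 2 f θ +
    (2/3) * (v θ) ^ ((1 : ℝ)/3) * deriv v θ * deriv f θ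

/-- For `g = v^{-4/3} g_s`: the affine (1-scalar) curvature
`κ_g = (1/3) v^{1/3} v'' − (2/9) v^{-2/3} (v')² + v^{4/3}`. -/
noncomputable def affineCurv (v : ℝ → ℝ) : ℝ → ℝ :=
  fun θ => (1/3) * (v θ) ^ ((1 : ℝ)/3) * iteratedDeriv 2 v θ -
    (2/9) * (v θ) ^ ((-2 : ℝ)/3) * (deriv v θ) ^ 2 + (v θ) ^ ((4 : ℝ)/3)

/-- For `g = v^{-4/3} g_s`: the symmetric `Q`-curvature
`Q^A_g = (1/9) v^{5/3} (v'''' + 10 v'' + 9v)`. -/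
noncomputable def symQ (v : ℝ → ℝ) : ℝ → ℝ :=
  fun θ => (1/9) * (v θ) ^ ((5 : ℝ)/3) *
    (iteratedDeriv 4 v θ + 10 * iteratedDeriv 2 v θ + 9 * v θ)

/-- For `g = v^{-4/3} g_s`: the operator
`P^A_g f = (1/9) Δ_g(Δ_g f) + (10/9) ∇_g(κ_g ∇_g f) + Q^A_g f`. -/
noncomputable def PAOp (v f : ℝ → ℝ) : ℝ → ℝ :=
  fun θ => (1/9) * lapOp v (lapOp v f) θ +
    (10/9) * gradOp v (fun t => affineCurv v t * gradOp v f t) θ +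
    symQ v θ * f θ

lemma itd2 (g : ℝ → ℝ) : iteratedDeriv 2 g = deriv (deriv g) := by
  rw [iteratedDeriv_eq_iterate]; rfl

lemma itd3 (g : ℝ → ℝ) : iteratedDeriv 3 g = deriv (deriv (deriv g)) := by
  rw [iteratedDeriv_eq_iterate]; rfl

lemma itd4 (g : ℝ → ℝ) : iteratedDeriv 4 g = deriv (deriv (deriv (deriv g))) := by
  rw [iteratedDeriv_eq_iterate]; rfl

lemma rpow_third_pow {x : ℝ} (hx : 0 < x) (n : ℕ) :
    x ^ ((n : ℝ)/3) = (x ^ ((1:ℝ)/3)) ^ n := by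
  rw [← Real.rpow_natCast (x ^ ((1:ℝ)/3)) n, ← Real.rpow_mul hx.le,
    show (1:ℝ)/3 * (n:ℝ) = (n:ℝ)/3 by ring]

lemma hasDerivAt_iteratedDeriv {f : ℝ → ℝ} (hf : ContDiff ℝ 4 f) (k : ℕ) (hk : k < 4) :
    ∀ x : ℝ, HasDerivAt (iteratedDeriv k f) (iteratedDeriv (k+1) f x) x := by
  intro x
  rw [iteratedDeriv_succ]
  exact (hf.differentiable_iteratedDeriv k (by exact_mod_cast hk) x).hasDerivAt


lemma leibAll (f g : ℝ → ℝ) (hf : ContDiff ℝ 4 f) (hg : ContDiff ℝ 4 g) :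
    (iteratedDeriv 1 (fun t => f t * g t) = fun x => (1 : ℝ) * (f x * iteratedDeriv 1 g x) + (1 : ℝ) * (iteratedDeriv 1 f x * g x)) ∧
    (iteratedDeriv 2 (fun t => f t * g t) = fun x => (1 : ℝ) * (f x * iteratedDeriv 2 g x) + (2 : ℝ) * (iteratedDeriv 1 f x * iteratedDeriv 1 g x) + (1 : ℝ) * (iteratedDeriv 2 f x * g x)) ∧
    (iteratedDeriv 3 (fun t => f t * g t) = fun x => (1 : ℝ) * (f x * iteratedDeriv 3 g x) + (3 : ℝ) * (iteratedDeriv 1 f x * iteratedDeriv 2 g x) + (3 : ℝ) * (iteratedDeriv 2 f x * iteratedDeriv 1 g x) + (1 : ℝ) * (iteratedDeriv 3 f x * g x)) ∧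
    (iteratedDeriv 4 (fun t => f t * g t) = fun x => (1 : ℝ) * (f x * iteratedDeriv 4 g x) + (4 : ℝ) * (iteratedDeriv 1 f x * iteratedDeriv 3 g x) + (6 : ℝ) * (iteratedDeriv 2 f x * iteratedDeriv 2 g x) + (4 : ℝ) * (iteratedDeriv 3 f x * iteratedDeriv 1 g x) + (1 : ℝ) * (iteratedDeriv 4 f x * g x)) := by
  have hF0 : ∀ x : ℝ, HasDerivAt f (iteratedDeriv 1 f x) x := by
    have h := hasDerivAt_iteratedDeriv hf 0 (by norm_num)
    rwa [iteratedDeriv_zero] at h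
  have hF1 := hasDerivAt_iteratedDeriv hf 1 (by norm_num)
  have hF2 := hasDerivAt_iteratedDeriv hf 2 (by norm_num)
  have hF3 := hasDerivAt_iteratedDeriv hf 3 (by norm_num)
  have hG0 : ∀ x : ℝ, HasDerivAt g (iteratedDeriv 1 g x) x := by
    have h := hasDerivAt_iteratedDeriv hg 0 (by norm_num)
    rwa [iteratedDeriv_zero] at h
  have hG1 := hasDerivAt_iteratedDeriv hg 1 (by norm_num)
  have hG2 := hasDerivAt_iteratedDeriv hg 2 (by norm_num)
  have hG3 := hasDerivAt_iteratedDeriv hg 3 (by norm_num)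
  have m1 : ∀ x : ℝ, HasDerivAt (fun t => (1 : ℝ) * (f t * g t)) ((1 : ℝ) * (f x * iteratedDeriv 1 g x) + (1 : ℝ) * (iteratedDeriv 1 f x * g x)) x :=
    fun x => ((HasDerivAt.const_mul (1 : ℝ) ((hF0 x).mul (hG0 x)))).congr_deriv (by push_cast; ring)
  have d1 : deriv (fun t => (1 : ℝ) * (f t * g t)) = fun x => (1 : ℝ) * (f x * iteratedDeriv 1 g x) + (1 : ℝ) * (iteratedDeriv 1 f x * g x) :=
    funext fun x => (m1 x).deriv
  have m2 : ∀ x : ℝ, HasDerivAt (fun t => (1 : ℝ) * (f t * iteratedDeriv 1 g t) + (1 : ℝ) * (iteratedDeriv 1 f t * g t)) ((1 : ℝ) * (f x * iteratedDeriv 2 g x) + (2 : ℝ) * (iteratedDeriv 1 f x * iteratedDeriv 1 g x) + (1 : ℝ) * (iteratedDeriv 2 f x * g x)) x :=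
    fun x => (((HasDerivAt.const_mul (1 : ℝ) ((hF0 x).mul (hG1 x))).add (HasDerivAt.const_mul (1 : ℝ) ((hF1 x).mul (hG0 x))))).congr_deriv (by push_cast; ring)
  have d2 : deriv (fun t => (1 : ℝ) * (f t * iteratedDeriv 1 g t) + (1 : ℝ) * (iteratedDeriv 1 f t * g t)) = fun x => (1 : ℝ) * (f x * iteratedDeriv 2 g x) + (2 : ℝ) * (iteratedDeriv 1 f x * iteratedDeriv 1 g x) + (1 : ℝ) * (iteratedDeriv 2 f x * g x) :=
    funext fun x => (m2 x).deriv
  have m3 : ∀ x : ℝ, HasDerivAt (fun t => (1 : ℝ) * (f t * iteratedDeriv 2 g t) + (2 : ℝ) * (iteratedDeriv 1 f t * iteratedDeriv 1 g t) + (1 : ℝ) * (iteratedDeriv 2 f t * g t)) ((1 : ℝ) * (f x * iteratedDeriv 3 g x) + (3 : ℝ) * (iteratedDeriv 1 f x * iteratedDeriv 2 g x) + (3 : ℝ) * (iteratedDeriv 2 f x * iteratedDeriv 1 g x) + (1 : ℝ) * (iteratedDeriv 3 f x * g x)) x :=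
    fun x => ((((HasDerivAt.const_mul (1 : ℝ) ((hF0 x).mul (hG2 x))).add (HasDerivAt.const_mul (2 : ℝ) ((hF1 x).mul (hG1 x)))).add (HasDerivAt.const_mul (1 : ℝ) ((hF2 x).mul (hG0 x))))).congr_deriv (by push_cast; ring)
  have d3 : deriv (fun t => (1 : ℝ) * (f t * iteratedDeriv 2 g t) + (2 : ℝ) * (iteratedDeriv 1 f t * iteratedDeriv 1 g t) + (1 : ℝ) * (iteratedDeriv 2 f t * g t)) = fun x => (1 : ℝ) * (f x * iteratedDeriv 3 g x) + (3 : ℝ) * (iteratedDeriv 1 f x * iteratedDeriv 2 g x) + (3 : ℝ) * (iteratedDeriv 2 f x * iteratedDeriv 1 g x) + (1 : ℝ) * (iteratedDeriv 3 f x * g x) :=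
    funext fun x => (m3 x).deriv
  have m4 : ∀ x : ℝ, HasDerivAt (fun t => (1 : ℝ) * (f t * iteratedDeriv 3 g t) + (3 : ℝ) * (iteratedDeriv 1 f t * iteratedDeriv 2 g t) + (3 : ℝ) * (iteratedDeriv 2 f t * iteratedDeriv 1 g t) + (1 : ℝ) * (iteratedDeriv 3 f t * g t)) ((1 : ℝ) * (f x * iteratedDeriv 4 g x) + (4 : ℝ) * (iteratedDeriv 1 f x * iteratedDeriv 3 g x) + (6 : ℝ) * (iteratedDeriv 2 f x * iteratedDeriv 2 g x) + (4 : ℝ) * (iteratedDeriv 3 f x * iteratedDeriv 1 g x) + (1 : ℝ) * (iteratedDeriv 4 f x * g x)) x :=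
    fun x => (((((HasDerivAt.const_mul (1 : ℝ) ((hF0 x).mul (hG3 x))).add (HasDerivAt.const_mul (3 : ℝ) ((hF1 x).mul (hG2 x)))).add (HasDerivAt.const_mul (3 : ℝ) ((hF2 x).mul (hG1 x)))).add (HasDerivAt.const_mul (1 : ℝ) ((hF3 x).mul (hG0 x))))).congr_deriv (by push_cast; ring)
  have d4 : deriv (fun t => (1 : ℝ) * (f t * iteratedDeriv 3 g t) + (3 : ℝ) * (iteratedDeriv 1 f t * iteratedDeriv 2 g t) + (3 : ℝ) * (iteratedDeriv 2 f t * iteratedDeriv 1 g t) + (1 : ℝ) * (iteratedDeriv 3 f t * g t)) = fun x => (1 : ℝ) * (f x * iteratedDeriv 4 g x) + (4 : ℝ) * (iteratedDeriv 1 f x * iteratedDeriv 3 g x) + (6 : ℝ) * (iteratedDeriv 2 f x * iteratedDeriv 2 g x) + (4 : ℝ) * (iteratedDeriv 3 f x * iteratedDeriv 1 g x) + (1 : ℝ) * (iteratedDeriv 4 f x * g x) :=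
    funext fun x => (m4 x).deriv
  have e1 : (fun t => f t * g t) = (fun t => (1 : ℝ) * (f t * g t)) := by
    funext t; ring
  refine ⟨?_, ?_, ?_, ?_⟩
  · rw [iteratedDeriv_one, e1, d1]
  · rw [itd2, e1, d1, d2]
  · rw [itd3, e1, d1, d2, d3]
  · rw [itd4, e1, d1, d2, d3, d4]

lemma PA_expand (v f : ℝ → ℝ) (hv : ContDiff ℝ 4 v) (hvpos : ∀ t, 0 < v t)
    (hf : ContDiff ℝ 4 f) (θ : ℝ) :
    PAOp v f θ = ((4 : ℝ)/243) * (v θ ^ ((1:ℝ)/3) * ((v θ ^ ((1:ℝ)/3))⁻¹) ^ 2 * iteratedDeriv 1 f θ * (iteratedDeriv 1 v θ) ^ 3) + ((4 : ℝ)/81) * ((v θ ^ ((1:ℝ)/3)) ^ 2 * iteratedDeriv 1 f θ * iteratedDeriv 1 v θ * iteratedDeriv 2 v θ) + ((4 : ℝ)/81) * ((v θ ^ ((1:ℝ)/3)) ^ 2 * iteratedDeriv 2 f θ * (iteratedDeriv 1 v θ) ^ 2) + ((-40 : ℝ)/243) * ((v θ ^ ((1:ℝ)/3)) ^ 3 *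 ((v θ ^ ((1:ℝ)/3))⁻¹) ^ 4 * iteratedDeriv 1 f θ * (iteratedDeriv 1 v θ) ^ 3) + ((-4 : ℝ)/81) * ((v θ ^ ((1:ℝ)/3)) ^ 4 * ((v θ ^ ((1:ℝ)/3))⁻¹) ^ 2 * iteratedDeriv 1 f θ * iteratedDeriv 1 v θ * iteratedDeriv 2 v θ) + ((-8 : ℝ)/81) * ((v θ ^ ((1:ℝ)/3)) ^ 4 * ((v θ ^ ((1:ℝ)/3))⁻¹) ^ 2 * iteratedDeriv 2 f θ * (iteratedDeriv 1 v θ) ^ 2) + ((4 : ℝ)/27) * ((v θ ^ ((1:ℝ)/3)) ^ 4 * ((v θ ^ ((1:ℝ)/3))⁻¹) ^ 5 * iteratedDeriv 1 f θ * (iteratedDeriv 1 v θ) ^ 3) + (1 : ℝ) * ((v θ ^ ((1:ℝ)/3)) ^ 5 * f θ * v θ) + ((10 : ℝ)/9) * ((v θ ^ ((1:ℝ)/3)) ^ 5 * f θ * iteratedDeriv 2 v θ) + ((1 : ℝ)/9) * ((v θ ^ ((1:ℝ)/3)) ^ 5 * f θ * iteratedDeriv 4 v θ) + ((4 : ℝ)/9)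 * ((v θ ^ ((1:ℝ)/3)) ^ 5 * iteratedDeriv 1 f θ * iteratedDeriv 3 v θ) + ((14 : ℝ)/27) * ((v θ ^ ((1:ℝ)/3)) ^ 5 * iteratedDeriv 2 f θ * iteratedDeriv 2 v θ) + ((4 : ℝ)/27) * ((v θ ^ ((1:ℝ)/3)) ^ 5 * iteratedDeriv 3 f θ * iteratedDeriv 1 v θ) + ((4 : ℝ)/27) * ((v θ ^ ((1:ℝ)/3)) ^ 6 * ((v θ ^ ((1:ℝ)/3))⁻¹) ^ 4 * iteratedDeriv 2 f θ * (iteratedDeriv 1 v θ) ^ 2) + ((20 : ℝ)/9) * ((v θ ^ ((1:ℝ)/3)) ^ 7 * ((v θ ^ ((1:ℝ)/3))⁻¹) ^ 2 * iteratedDeriv 1 f θ * iteratedDeriv 1 v θ) + ((4 : ℝ)/27) * ((v θ ^ ((1:ℝ)/3)) ^ 7 * ((v θ ^ ((1:ℝ)/3))⁻¹) ^ 2 * iteratedDeriv 2 f θ * iteratedDeriv 2 v θ) + ((8 : ℝ)/27) * ((v θ ^ ((1:ℝ)/3)) ^ 7 * ((v θ ^ ((1:ℝ)/3))⁻¹)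 ^ 2 * iteratedDeriv 3 f θ * iteratedDeriv 1 v θ) + ((-8 : ℝ)/81) * ((v θ ^ ((1:ℝ)/3)) ^ 7 * ((v θ ^ ((1:ℝ)/3))⁻¹) ^ 5 * iteratedDeriv 2 f θ * (iteratedDeriv 1 v θ) ^ 2) + ((10 : ℝ)/9) * ((v θ ^ ((1:ℝ)/3)) ^ 8 * iteratedDeriv 2 f θ) + ((1 : ℝ)/9) * ((v θ ^ ((1:ℝ)/3)) ^ 8 * iteratedDeriv 4 f θ) := by
  have hV0 : ∀ x : ℝ, HasDerivAt v (iteratedDeriv 1 v x) x := by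
    have h := hasDerivAt_iteratedDeriv hv 0 (by norm_num)
    rwa [iteratedDeriv_zero] at h
  have hV1 := hasDerivAt_iteratedDeriv hv 1 (by norm_num)
  have hV2 := hasDerivAt_iteratedDeriv hv 2 (by norm_num)
  have hV3 := hasDerivAt_iteratedDeriv hv 3 (by norm_num)
  have hF0 : ∀ x : ℝ, HasDerivAt f (iteratedDeriv 1 f x) x := by
    have h := hasDerivAt_iteratedDeriv hf 0 (by norm_num)
    rwa [iteratedDeriv_zero] at h
  have hF1 := hasDerivAt_iteratedDeriv hf 1 (by norm_num)
  have hF2 := hasDerivAt_iteratedDeriv hf 2 (by norm_num)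
  have hF3 := hasDerivAt_iteratedDeriv hf 3 (by norm_num)
  have hvne : ∀ x : ℝ, v x ^ ((1:ℝ)/3) ≠ 0 := fun x => (Real.rpow_pos_of_pos (hvpos x) _).ne'
  have hv43 : ∀ t : ℝ, v t ^ ((4:ℝ)/3) = (v t ^ ((1:ℝ)/3)) ^ 4 := fun t => by
    rw [show (4:ℝ)/3 = ((4:ℕ):ℝ)/3 by norm_num]; exact rpow_third_pow (hvpos t) 4
  have hv23 : ∀ t : ℝ, v t ^ ((2:ℝ)/3) = (v t ^ ((1:ℝ)/3)) ^ 2 := fun t => by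
    rw [show (2:ℝ)/3 = ((2:ℕ):ℝ)/3 by norm_num]; exact rpow_third_pow (hvpos t) 2
  have hv53 : ∀ t : ℝ, v t ^ ((5:ℝ)/3) = (v t ^ ((1:ℝ)/3)) ^ 5 := fun t => by
    rw [show (5:ℝ)/3 = ((5:ℕ):ℝ)/3 by norm_num]; exact rpow_third_pow (hvpos t) 5
  have hvneg : ∀ t : ℝ, v t ^ ((-2:ℝ)/3) = ((v t ^ ((1:ℝ)/3))⁻¹) ^ 2 := fun t => by
    rw [show (-2:ℝ)/3 = -(((2:ℕ):ℝ)/3) by norm_num, Real.rpow_neg (hvpos t).le,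
      rpow_third_pow (hvpos t) 2, inv_pow]
  have hdv : deriv v = iteratedDeriv 1 v := iteratedDeriv_one.symm
  have hdf : deriv f = iteratedDeriv 1 f := iteratedDeriv_one.symm
  have hA : ∀ x : ℝ, HasDerivAt (fun t => v t ^ ((1:ℝ)/3))
      (((1:ℝ)/3) * ((v x ^ ((1:ℝ)/3))⁻¹) ^ 2 * iteratedDeriv 1 v x) x := by
    intro x
    have h := (hV0 x).rpow_const (p := (1:ℝ)/3) (Or.inl (hvpos x).ne')
    refine h.congr_deriv ?_
    rw [show (1:ℝ)/3 - 1 = (-2:ℝ)/3 by norm_num, hvneg x]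
    ring
  have hAi : ∀ x : ℝ, HasDerivAt (fun t => (v t ^ ((1:ℝ)/3))⁻¹)
      ((-(1:ℝ)/3) * ((v x ^ ((1:ℝ)/3))⁻¹) ^ 4 * iteratedDeriv 1 v x) x := by
    intro x
    refine ((hA x).inv (hvne x)).congr_deriv ?_
    field_simp
  have hLeq : lapOp v f = (fun t => ((2 : ℝ)/3) * (v t ^ ((1:ℝ)/3) * iteratedDeriv 1 f t * iteratedDeriv 1 v t) + (1 : ℝ) * ((v t ^ ((1:ℝ)/3)) ^ 4 * iteratedDeriv 2 f t)) := by
    funext t; simp only [lapOp]; rw [hv43 t, hdv, hdf]; ring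
  have hL1 : ∀ x : ℝ, HasDerivAt (fun t => ((2 : ℝ)/3) * (v t ^ ((1:ℝ)/3) * iteratedDeriv 1 f t * iteratedDeriv 1 v t) + (1 : ℝ) * ((v t ^ ((1:ℝ)/3)) ^ 4 * iteratedDeriv 2 f t)) (((2 : ℝ)/3) * (v x ^ ((1:ℝ)/3) * iteratedDeriv 1 f x * iteratedDeriv 2 v x) + ((2 : ℝ)/3) * (v x ^ ((1:ℝ)/3) * iteratedDeriv 2 f x * iteratedDeriv 1 v x) + ((4 : ℝ)/3) * ((v x ^ ((1:ℝ)/3)) ^ 3 * ((v x ^ ((1:ℝ)/3))⁻¹) ^ 2 * iteratedDeriv 2 f x * iteratedDeriv 1 v x) + (1 : ℝ) * ((v x ^ ((1:ℝ)/3)) ^ 4 * iteratedDeriv 3 f x) + ((2 : ℝ)/9) * (((v x ^ ((1:ℝ)/3))⁻¹) ^ 2 * iteratedDeriv 1 f x * (iteratedDeriv 1 v x) ^ 2)) x :=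
    fun x => (((HasDerivAt.const_mul ((2 : ℝ)/3) (((hA x).mul (hF1 x)).mul (hV1 x))).add (HasDerivAt.const_mul (1 : ℝ) (((hA x).pow (n := 4)).mul (hF2 x))))).congr_deriv (by push_cast; simp only [Pi.mul_apply, Pi.pow_apply, Pi.inv_apply]; ring)
  have hL1fun : deriv (fun t => ((2 : ℝ)/3) * (v t ^ ((1:ℝ)/3) * iteratedDeriv 1 f t * iteratedDeriv 1 v t) + (1 : ℝ) * ((v t ^ ((1:ℝ)/3)) ^ 4 * iteratedDeriv 2 f t)) = fun x => ((2 : ℝ)/3) * (v x ^ ((1:ℝ)/3) * iteratedDeriv 1 f x * iteratedDeriv 2 v x) + ((2 : ℝ)/3) * (v x ^ ((1:ℝ)/3) * iteratedDeriv 2 f x * iteratedDeriv 1 v x) + ((4 : ℝ)/3) * ((v x ^ ((1:ℝ)/3)) ^ 3 * ((v x ^ ((1:ℝ)/3))⁻¹) ^ 2 * iteratedDeriv 2 f x * iteratedDeriv 1 v x) + (1 : ℝ) * ((v x ^ ((1:ℝ)/3)) ^ 4 * iteratedDeriv 3 f x) + ((2 : ℝ)/9) * (((v x ^ ((1:ℝ)/3))⁻¹)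 ^ 2 * iteratedDeriv 1 f x * (iteratedDeriv 1 v x) ^ 2) :=
    funext fun x => (hL1 x).deriv
  have hL2 : ∀ x : ℝ, HasDerivAt (fun t => ((2 : ℝ)/3) * (v t ^ ((1:ℝ)/3) * iteratedDeriv 1 f t * iteratedDeriv 2 v t) + ((2 : ℝ)/3) * (v t ^ ((1:ℝ)/3) * iteratedDeriv 2 f t * iteratedDeriv 1 v t) + ((4 : ℝ)/3) * ((v t ^ ((1:ℝ)/3)) ^ 3 * ((v t ^ ((1:ℝ)/3))⁻¹) ^ 2 * iteratedDeriv 2 f t * iteratedDeriv 1 v t) + (1 : ℝ) * ((v t ^ ((1:ℝ)/3)) ^ 4 * iteratedDeriv 3 f t) + ((2 : ℝ)/9) * (((v t ^ ((1:ℝ)/3))⁻¹) ^ 2 * iteratedDeriv 1 f t * (iteratedDeriv 1 v t) ^ 2)) (((2 : ℝ)/3) * (v x ^ ((1:ℝ)/3) * iteratedDeriv 1 f x * iteratedDeriv 3 v x) + ((4 : ℝ)/3) * (v x ^ ((1:ℝ)/3) * iteratedDeriv 2 f x * iteratedDeriv 2 v x) + ((2 : ℝ)/3) * (v x ^ ((1:ℝ)/3)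 * iteratedDeriv 3 f x * iteratedDeriv 1 v x) + ((4 : ℝ)/3) * ((v x ^ ((1:ℝ)/3)) ^ 2 * ((v x ^ ((1:ℝ)/3))⁻¹) ^ 4 * iteratedDeriv 2 f x * (iteratedDeriv 1 v x) ^ 2) + ((4 : ℝ)/3) * ((v x ^ ((1:ℝ)/3)) ^ 3 * ((v x ^ ((1:ℝ)/3))⁻¹) ^ 2 * iteratedDeriv 2 f x * iteratedDeriv 2 v x) + ((8 : ℝ)/3) * ((v x ^ ((1:ℝ)/3)) ^ 3 * ((v x ^ ((1:ℝ)/3))⁻¹) ^ 2 * iteratedDeriv 3 f x * iteratedDeriv 1 v x) + ((-8 : ℝ)/9) * ((v x ^ ((1:ℝ)/3)) ^ 3 * ((v x ^ ((1:ℝ)/3))⁻¹) ^ 5 * iteratedDeriv 2 f x * (iteratedDeriv 1 v x) ^ 2) + (1 : ℝ) * ((v x ^ ((1:ℝ)/3)) ^ 4 * iteratedDeriv 4 f x) + ((2 : ℝ)/3) * (((v x ^ ((1:ℝ)/3))⁻¹) ^ 2 * iteratedDeriv 1 f x * iteratedDeriv 1 v x * iteratedDeriv 2 v x) + ((4 :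 ℝ)/9) * (((v x ^ ((1:ℝ)/3))⁻¹) ^ 2 * iteratedDeriv 2 f x * (iteratedDeriv 1 v x) ^ 2) + ((-4 : ℝ)/27) * (((v x ^ ((1:ℝ)/3))⁻¹) ^ 5 * iteratedDeriv 1 f x * (iteratedDeriv 1 v x) ^ 3)) x :=
    fun x => ((((((HasDerivAt.const_mul ((2 : ℝ)/3) (((hA x).mul (hF1 x)).mul (hV2 x))).add (HasDerivAt.const_mul ((2 : ℝ)/3) (((hA x).mul (hF2 x)).mul (hV1 x)))).add (HasDerivAt.const_mul ((4 : ℝ)/3) (((((hA x).pow (n := 3)).mul ((hAi x).pow (n := 2))).mul (hF2 x)).mul (hV1 x)))).add (HasDerivAt.const_mul (1 : ℝ) (((hA x).pow (n := 4)).mul (hF3 x)))).add (HasDerivAt.const_mul ((2 : ℝ)/9) ((((hAi x).pow (n := 2)).mul (hF1 x)).mul ((hV1 x).pow (n := 2)))))).congr_deriv (by push_cast; simp only [Pi.mul_apply, Pi.pow_apply, Pi.inv_apply]; ring)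
  have hL2fun : deriv (fun t => ((2 : ℝ)/3) * (v t ^ ((1:ℝ)/3) * iteratedDeriv 1 f t * iteratedDeriv 2 v t) + ((2 : ℝ)/3) * (v t ^ ((1:ℝ)/3) * iteratedDeriv 2 f t * iteratedDeriv 1 v t) + ((4 : ℝ)/3) * ((v t ^ ((1:ℝ)/3)) ^ 3 * ((v t ^ ((1:ℝ)/3))⁻¹) ^ 2 * iteratedDeriv 2 f t * iteratedDeriv 1 v t) + (1 : ℝ) * ((v t ^ ((1:ℝ)/3)) ^ 4 * iteratedDeriv 3 f t) + ((2 : ℝ)/9) * (((v t ^ ((1:ℝ)/3))⁻¹) ^ 2 * iteratedDeriv 1 f t * (iteratedDeriv 1 v t) ^ 2)) = fun x => ((2 : ℝ)/3) * (v x ^ ((1:ℝ)/3) * iteratedDeriv 1 f x * iteratedDeriv 3 v x) + ((4 : ℝ)/3) * (v x ^ ((1:ℝ)/3) * iteratedDeriv 2 f x * iteratedDeriv 2 v x) + ((2 : ℝ)/3) * (v x ^ ((1:ℝ)/3) * iteratedDeriv 3 f x * iteratedDeriv 1 v x) + ((4 : ℝ)/3) * ((v x ^ ((1:ℝ)/3))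 ^ 2 * ((v x ^ ((1:ℝ)/3))⁻¹) ^ 4 * iteratedDeriv 2 f x * (iteratedDeriv 1 v x) ^ 2) + ((4 : ℝ)/3) * ((v x ^ ((1:ℝ)/3)) ^ 3 * ((v x ^ ((1:ℝ)/3))⁻¹) ^ 2 * iteratedDeriv 2 f x * iteratedDeriv 2 v x) + ((8 : ℝ)/3) * ((v x ^ ((1:ℝ)/3)) ^ 3 * ((v x ^ ((1:ℝ)/3))⁻¹) ^ 2 * iteratedDeriv 3 f x * iteratedDeriv 1 v x) + ((-8 : ℝ)/9) * ((v x ^ ((1:ℝ)/3)) ^ 3 * ((v x ^ ((1:ℝ)/3))⁻¹) ^ 5 * iteratedDeriv 2 f x * (iteratedDeriv 1 v x) ^ 2) + (1 : ℝ) * ((v x ^ ((1:ℝ)/3)) ^ 4 * iteratedDeriv 4 f x) + ((2 : ℝ)/3) * (((v x ^ ((1:ℝ)/3))⁻¹) ^ 2 * iteratedDeriv 1 f x * iteratedDeriv 1 v x * iteratedDeriv 2 v x) + ((4 : ℝ)/9) * (((v x ^ ((1:ℝ)/3))⁻¹) ^ 2 * iteratedDeriv 2 f x * (iteratedDeriv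 1 v x) ^ 2) + ((-4 : ℝ)/27) * (((v x ^ ((1:ℝ)/3))⁻¹) ^ 5 * iteratedDeriv 1 f x * (iteratedDeriv 1 v x) ^ 3) :=
    funext fun x => (hL2 x).deriv
  have hKeq : (fun t => affineCurv v t * gradOp v f t) = (fun t => ((-2 : ℝ)/9) * ((v t ^ ((1:ℝ)/3)) ^ 2 * ((v t ^ ((1:ℝ)/3))⁻¹) ^ 2 * iteratedDeriv 1 f t * (iteratedDeriv 1 v t) ^ 2) + ((1 : ℝ)/3) * ((v t ^ ((1:ℝ)/3)) ^ 3 * iteratedDeriv 1 f t * iteratedDeriv 2 v t) + (1 : ℝ) * ((v t ^ ((1:ℝ)/3)) ^ 6 * iteratedDeriv 1 f t)) := by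
    funext t; simp only [affineCurv, gradOp]; rw [hv43 t, hv23 t, hvneg t, hdv, hdf]; ring
  have hK1 : ∀ x : ℝ, HasDerivAt (fun t => ((-2 : ℝ)/9) * ((v t ^ ((1:ℝ)/3)) ^ 2 * ((v t ^ ((1:ℝ)/3))⁻¹) ^ 2 * iteratedDeriv 1 f t * (iteratedDeriv 1 v t) ^ 2) + ((1 : ℝ)/3) * ((v t ^ ((1:ℝ)/3)) ^ 3 * iteratedDeriv 1 f t * iteratedDeriv 2 v t) + (1 : ℝ) * ((v t ^ ((1:ℝ)/3)) ^ 6 * iteratedDeriv 1 f t)) (((-4 : ℝ)/27) * (v x ^ ((1:ℝ)/3) * ((v x ^ ((1:ℝ)/3))⁻¹) ^ 4 * iteratedDeriv 1 f x * (iteratedDeriv 1 v x) ^ 3) + ((-1 : ℝ)/9) * ((v x ^ ((1:ℝ)/3)) ^ 2 * ((v x ^ ((1:ℝ)/3))⁻¹) ^ 2 * iteratedDeriv 1 f x * iteratedDeriv 1 v x * iteratedDeriv 2 v x) + ((-2 : ℝ)/9) * ((v x ^ ((1:ℝ)/3)) ^ 2 * ((v x ^ ((1:ℝ)/3))⁻¹)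 ^ 2 * iteratedDeriv 2 f x * (iteratedDeriv 1 v x) ^ 2) + ((4 : ℝ)/27) * ((v x ^ ((1:ℝ)/3)) ^ 2 * ((v x ^ ((1:ℝ)/3))⁻¹) ^ 5 * iteratedDeriv 1 f x * (iteratedDeriv 1 v x) ^ 3) + ((1 : ℝ)/3) * ((v x ^ ((1:ℝ)/3)) ^ 3 * iteratedDeriv 1 f x * iteratedDeriv 3 v x) + ((1 : ℝ)/3) * ((v x ^ ((1:ℝ)/3)) ^ 3 * iteratedDeriv 2 f x * iteratedDeriv 2 v x) + (2 : ℝ) * ((v x ^ ((1:ℝ)/3)) ^ 5 * ((v x ^ ((1:ℝ)/3))⁻¹) ^ 2 * iteratedDeriv 1 f x * iteratedDeriv 1 v x) + (1 : ℝ) * ((v x ^ ((1:ℝ)/3)) ^ 6 * iteratedDeriv 2 f x)) x :=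
    fun x => ((((HasDerivAt.const_mul ((-2 : ℝ)/9) (((((hA x).pow (n := 2)).mul ((hAi x).pow (n := 2))).mul (hF1 x)).mul ((hV1 x).pow (n := 2)))).add (HasDerivAt.const_mul ((1 : ℝ)/3) ((((hA x).pow (n := 3)).mul (hF1 x)).mul (hV2 x)))).add (HasDerivAt.const_mul (1 : ℝ) (((hA x).pow (n := 6)).mul (hF1 x))))).congr_deriv (by push_cast; simp only [Pi.mul_apply, Pi.pow_apply, Pi.inv_apply]; ring)
  have hK1fun : deriv (fun t => ((-2 : ℝ)/9) * ((v t ^ ((1:ℝ)/3)) ^ 2 * ((v t ^ ((1:ℝ)/3))⁻¹) ^ 2 * iteratedDeriv 1 f t * (iteratedDeriv 1 v t) ^ 2) + ((1 : ℝ)/3) * ((v t ^ ((1:ℝ)/3)) ^ 3 * iteratedDeriv 1 f t * iteratedDeriv 2 v t) + (1 : ℝ) * ((v t ^ ((1:ℝ)/3)) ^ 6 * iteratedDeriv 1 f t)) = fun x => ((-4 : ℝ)/27) * (v x ^ ((1:ℝ)/3) * ((v x ^ ((1:ℝ)/3))⁻¹) ^ 4 * iteratedDeriv 1 f x * (iteratedDeriv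 1 v x) ^ 3) + ((-1 : ℝ)/9) * ((v x ^ ((1:ℝ)/3)) ^ 2 * ((v x ^ ((1:ℝ)/3))⁻¹) ^ 2 * iteratedDeriv 1 f x * iteratedDeriv 1 v x * iteratedDeriv 2 v x) + ((-2 : ℝ)/9) * ((v x ^ ((1:ℝ)/3)) ^ 2 * ((v x ^ ((1:ℝ)/3))⁻¹) ^ 2 * iteratedDeriv 2 f x * (iteratedDeriv 1 v x) ^ 2) + ((4 : ℝ)/27) * ((v x ^ ((1:ℝ)/3)) ^ 2 * ((v x ^ ((1:ℝ)/3))⁻¹) ^ 5 * iteratedDeriv 1 f x * (iteratedDeriv 1 v x) ^ 3) + ((1 : ℝ)/3) * ((v x ^ ((1:ℝ)/3)) ^ 3 * iteratedDeriv 1 f x * iteratedDeriv 3 v x) + ((1 : ℝ)/3) * ((v x ^ ((1:ℝ)/3)) ^ 3 * iteratedDeriv 2 f x * iteratedDeriv 2 v x) + (2 : ℝ) * ((v x ^ ((1:ℝ)/3)) ^ 5 * ((v x ^ ((1:ℝ)/3))⁻¹) ^ 2 * iteratedDeriv 1 f x * iteratedDeriv 1 v x) + (1 : ℝ) * ((v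 x ^ ((1:ℝ)/3)) ^ 6 * iteratedDeriv 2 f x) :=
    funext fun x => (hK1 x).deriv
  simp only [PAOp]
  rw [hKeq, hLeq]
  simp only [lapOp, gradOp, symQ]
  rw [itd2, hL1fun, hL2fun, hK1fun, hv43 θ, hv23 θ, hv53 θ, hdv]
  ring

/-- Proposition 2 of the paper: conformal covariance of `P^A_g`.
With `g₁ = v^{-4/3} g_s` and `g₂ = φ^{-4/3} g₁ = (φv)^{-4/3} g_s`:
(i) `Q^A_{g₂} = φ^{5/3} P^A_{g₁} φ` and (ii) `P^A_{g₂} ψ = φ^{5/3} P^A_{g₁}(ψφ)`. -/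
theorem conformal_covariance_PA
    (v φ ψ : ℝ → ℝ)
    (hv : ContDiff ℝ (⊤ : ℕ∞) v) (hφ : ContDiff ℝ (⊤ : ℕ∞) φ) (hψ : ContDiff ℝ 4 ψ)
    (hvpos : ∀ θ, 0 < v θ) (hφpos : ∀ θ, 0 < φ θ)
    (hvper : Function.Periodic v (2 * π)) (hφper : Function.Periodic φ (2 * π))
    (hψper : Function.Periodic ψ (2 * π)) :
    ∀ θ : ℝ,
      -- (i)  Q^A_{g₂} = φ^{5/3} P^A_{g₁} φ
      ((1/9) * (v θ * φ θ) ^ ((5 : ℝ)/3) *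
          (iteratedDeriv 4 (fun t => v t * φ t) θ +
            10 * iteratedDeriv 2 (fun t => v t * φ t) θ + 9 * (v θ * φ θ)) =
        (φ θ) ^ ((5 : ℝ)/3) * PAOp v φ θ) ∧
      -- (ii)  P^A_{g₂} ψ = φ^{5/3} P^A_{g₁}(ψφ)
      (PAOp (fun t => φ t * v t) ψ θ =
        (φ θ) ^ ((5 : ℝ)/3) * PAOp v (fun t => ψ t * φ t) θ) := by
  intro θ
  have hv4 : ContDiff ℝ 4 v := hv.of_le (WithTop.coe_le_coe.mpr le_top)
  have hφ4 : ContDiff ℝ 4 φ := hφ.of_le (WithTop.coe_le_coe.mpr le_top)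
  have hw4 : ContDiff ℝ 4 (fun t => φ t * v t) := hφ4.mul hv4
  have hψφ4 : ContDiff ℝ 4 (fun t => ψ t * φ t) := hψ.mul hφ4
  have hwpos : ∀ t, 0 < φ t * v t := fun t => mul_pos (hφpos t) (hvpos t)
  obtain ⟨lv1, lv2, lv3, lv4⟩ := leibAll v φ hv4 hφ4
  obtain ⟨lw1, lw2, lw3, lw4⟩ := leibAll φ v hφ4 hv4
  obtain ⟨ls1, ls2, ls3, ls4⟩ := leibAll ψ φ hψ hφ4
  have h53 : ∀ x : ℝ, 0 < x → x ^ ((5:ℝ)/3) = (x ^ ((1:ℝ)/3)) ^ 5 := fun x hx => by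
    rw [show (5:ℝ)/3 = ((5:ℕ):ℝ)/3 by norm_num]; exact rpow_third_pow hx 5
  have hcube : ∀ x : ℝ, 0 < x → (x ^ ((1:ℝ)/3)) ^ 3 = x := fun x hx => by
    rw [← rpow_third_pow hx 3, show ((3:ℕ):ℝ)/3 = (1:ℝ) by norm_num, Real.rpow_one]
  have hAne : v θ ^ ((1:ℝ)/3) ≠ 0 := (Real.rpow_pos_of_pos (hvpos θ) _).ne'
  have hBne : φ θ ^ ((1:ℝ)/3) ≠ 0 := (Real.rpow_pos_of_pos (hφpos θ) _).ne'
  constructor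
  · rw [PA_expand v φ hv4 hvpos hφ4 θ, lv2, lv4,
      Real.mul_rpow (hvpos θ).le (hφpos θ).le, h53 _ (hvpos θ), h53 _ (hφpos θ)]
    simp only []
    set A := v θ ^ ((1:ℝ)/3) with hA
    set B := φ θ ^ ((1:ℝ)/3) with hB
    have hA3 : v θ = A ^ 3 := by rw [hA]; exact (hcube _ (hvpos θ)).symm
    have hB3 : φ θ = B ^ 3 := by rw [hB]; exact (hcube _ (hφpos θ)).symm
    have hA0 : A ≠ 0 := by rw [hA]; exact (Real.rpow_pos_of_pos (hvpos θ) _).ne'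
    have hB0 : B ≠ 0 := by rw [hB]; exact (Real.rpow_pos_of_pos (hφpos θ) _).ne'
    rw [hA3, hB3]
    field_simp
    ring
  · rw [PA_expand (fun t => φ t * v t) ψ hw4 hwpos hψ θ,
      PA_expand v (fun t => ψ t * φ t) hv4 hvpos hψφ4 θ,
      lw1, lw2, lw3, lw4, ls1, ls2, ls3, ls4]
    simp only []
    rw [Real.mul_rpow (hφpos θ).le (hvpos θ).le, h53 _ (hφpos θ)]
    set A := v θ ^ ((1:ℝ)/3) with hA
    set B := φ θ ^ ((1:ℝ)/3) with hB
    have hA3 : v θ = A ^ 3 := by rw [hA]; exact (hcube _ (hvpos θ)).symm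
    have hB3 : φ θ = B ^ 3 := by rw [hB]; exact (hcube _ (hφpos θ)).symm
    have hA0 : A ≠ 0 := by rw [hA]; exact (Real.rpow_pos_of_pos (hvpos θ) _).ne'
    have hB0 : B ≠ 0 := by rw [hB]; exact (Real.rpow_pos_of_pos (hφpos θ) _).ne'
    rw [hA3, hB3]
    field_simp
    ring
end

section
/- Let τ > 0 and let w ∈ C²(ℝ) be positive with w''(y) = τ·w(y)^{-3} for all y, and suppose w(y) = O(|y|) as |y| → ∞. Then there exist constants c₁ > 0 and a ∈ ℝ such that w(y) = √( (τ + c₁²(y − a)²)/c₁ ) for all y ∈ ℝ. -/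
open Real

/-- Classification of the positive solutions of `w'' = τ·w⁻³` on `ℝ` of at most linear
growth (used in the proof of Theorem 2 of the paper). -/
theorem ode_classification_line
    (τ : ℝ) (hτ : 0 < τ) (w : ℝ → ℝ) (hw : ContDiff ℝ 2 w)
    (hpos : ∀ y, 0 < w y)
    (hode : ∀ y, iteratedDeriv 2 w y = τ * (w y) ^ (-3 : ℤ))
    (hgrowth : ∃ M R : ℝ, 0 < M ∧ 0 < R ∧ ∀ y : ℝ, R ≤ |y| → w y ≤ M * |y|) :
    ∃ c₁ > (0:ℝ), ∃ a : ℝ, ∀ y : ℝ,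
      w y = Real.sqrt ((τ + c₁ ^ 2 * (y - a) ^ 2) / c₁) := by
  have hd1 : Differentiable ℝ w := hw.differentiable (by norm_num)
  have hd2 : Differentiable ℝ (deriv w) := by
    have := hw.differentiable_iteratedDeriv 1 (by norm_num)
    simpa [iteratedDeriv_one] using this
  have hwne : ∀ y, w y ≠ 0 := fun y => (hpos y).ne'
  have hode' : ∀ y, deriv (deriv w) y = τ / (w y) ^ 3 := by
    intro y
    have h := hode y
    rw [show (2:ℕ) = 1 + 1 from rfl, iteratedDeriv_succ, iteratedDeriv_one] at h
    rw [h, zpow_neg]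
    norm_num [div_eq_mul_inv, inv_pow]
  set E : ℝ := (deriv w 0) ^ 2 + τ / (w 0) ^ 2 with hEdef
  have hEpos : 0 < E := by
    have h1 : 0 < τ / (w 0) ^ 2 := div_pos hτ (pow_pos (hpos 0) 2)
    have h2 : 0 ≤ (deriv w 0) ^ 2 := sq_nonneg _
    rw [hEdef]
    linarith
  -- energy conservation
  have henergyder : ∀ x, HasDerivAt (fun z => (deriv w z) ^ 2 + τ / (w z) ^ 2) 0 x := by
    intro x
    have h1 : HasDerivAt w (deriv w x) x := (hd1 x).hasDerivAt
    have h2 : HasDerivAt (deriv w) (deriv (deriv w) x) x := (hd2 x).hasDerivAt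
    have h3 : HasDerivAt (fun z => (deriv w z) ^ 2)
        (2 * deriv w x * deriv (deriv w) x) x := by
      simpa [mul_comm, mul_assoc, mul_left_comm] using h2.fun_pow 2
    have h4 : HasDerivAt (fun z => (w z) ^ 2) (2 * w x * deriv w x) x := by
      simpa [mul_comm, mul_assoc, mul_left_comm] using h1.fun_pow 2
    have h5 : HasDerivAt (fun z => τ / (w z) ^ 2)
        (τ * (-(2 * w x * deriv w x) / ((w x) ^ 2) ^ 2)) x := by
      have := (h4.inv (pow_ne_zero 2 (hwne x))).const_mul τ
      simpa [div_eq_mul_inv] using this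
    have hsum := h3.add h5
    have hval : 2 * deriv w x * deriv (deriv w) x
        + τ * (-(2 * w x * deriv w x) / ((w x) ^ 2) ^ 2) = 0 := by
      rw [hode' x]
      field_simp [hwne x]
      ring
    rw [hval] at hsum
    exact hsum
  have energy : ∀ y, (deriv w y) ^ 2 + τ / (w y) ^ 2 = E := by
    intro y
    exact is_const_of_deriv_eq_zero
      (fun x => (henergyder x).differentiableAt)
      (fun x => (henergyder x).deriv) y 0
  -- p = derivative of w²
  set p : ℝ → ℝ := fun z => 2 * w z * deriv w z with hpdef
  have hpder : ∀ x, HasDerivAt p (2 * E) x := by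
    intro x
    have h1 : HasDerivAt w (deriv w x) x := (hd1 x).hasDerivAt
    have h2 : HasDerivAt (deriv w) (deriv (deriv w) x) x := (hd2 x).hasDerivAt
    have h6 : HasDerivAt p
        (2 * (deriv w x * deriv w x + w x * deriv (deriv w) x)) x := by
      have := (h1.mul h2).const_mul 2
      simpa [hpdef, mul_comm, mul_assoc, mul_left_comm] using this
    have hval : 2 * (deriv w x * deriv w x + w x * deriv (deriv w) x) = 2 * E := by
      rw [hode' x, ← energy x]
      field_simp [hwne x]
    rwa [hval] at h6
  -- p z = 2 E z + p 0
  have hplin : ∀ z, p z = 2 * E * z + p 0 := by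
    intro z
    have hq : ∀ x, HasDerivAt (fun z => p z - 2 * E * z) 0 x := by
      intro x
      have := (hpder x).fun_sub ((hasDerivAt_id x).const_mul (2 * E))
      simpa using this
    have := is_const_of_deriv_eq_zero
      (fun x => (hq x).differentiableAt) (fun x => (hq x).deriv) z 0
    simp at this
    linarith [this]
  -- w z ^ 2 = E z² + p 0 z + w 0 ²
  have hquad : ∀ z, (w z) ^ 2 = E * z ^ 2 + p 0 * z + (w 0) ^ 2 := by
    intro z
    have hr : ∀ x, HasDerivAt (fun z => (w z) ^ 2 - (E * z ^ 2 + p 0 * z)) 0 x := by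
      intro x
      have h1 : HasDerivAt w (deriv w x) x := (hd1 x).hasDerivAt
      have h4 : HasDerivAt (fun z => (w z) ^ 2) (p x) x := by
        simpa [hpdef, mul_comm, mul_assoc, mul_left_comm] using h1.fun_pow 2
      have h7 : HasDerivAt (fun z : ℝ => E * z ^ 2 + p 0 * z)
          (2 * E * x + p 0) x := by
        have hA : HasDerivAt (fun z : ℝ => E * z ^ 2) (E * (2 * x)) x := by
          simpa using ((hasDerivAt_pow 2 x).const_mul E)
        have hB : HasDerivAt (fun z : ℝ => p 0 * z) (p 0) x := by
          simpa using (hasDerivAt_id x).const_mul (p 0)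
        have := hA.fun_add hB
        rw [show 2 * E * x + p 0 = E * (2 * x) + p 0 by ring]
        exact this
      have := h4.sub h7
      have hz : p x - (2 * E * x + p 0) = 0 := by rw [hplin x]; ring
      rwa [hz] at this
    have := is_const_of_deriv_eq_zero
      (fun x => (hr x).differentiableAt) (fun x => (hr x).deriv) z 0
    simp at this
    linarith [this]
  -- vertex
  set a : ℝ := -(p 0) / (2 * E) with hadef
  have hp0 : p 0 = -(2 * E * a) := by
    have h2E : (2 * E) ≠ 0 := mul_ne_zero two_ne_zero hEpos.ne'
    rw [hadef, neg_div, mul_neg, neg_neg, mul_div_assoc', mul_div_cancel_left₀ _ h2E]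
  have hpa : p a = 0 := by rw [hplin a, hp0]; ring
  have hwa' : deriv w a = 0 := by
    have : 2 * w a * deriv w a = 0 := hpa
    rcases mul_eq_zero.mp this with h | h
    · exact absurd h (mul_ne_zero two_ne_zero (hwne a))
    · exact h
  have hwa2 : (w a) ^ 2 = τ / E := by
    have h := energy a
    rw [hwa'] at h
    norm_num at h
    have h2 : τ = E * (w a) ^ 2 := by
      field_simp [hwne a] at h
      linarith
    rw [eq_div_iff hEpos.ne']
    linarith
  -- final formula for w²
  have key : ∀ y, (w y) ^ 2 = E * (y - a) ^ 2 + τ / E := by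
    intro y
    have h1 := hquad y
    have h2 := hquad a
    rw [hwa2] at h2
    rw [hp0] at h2
    rw [h1, hp0]
    linear_combination -h2
  refine ⟨E, hEpos, a, fun y => ?_⟩
  have hform : (τ + E ^ 2 * (y - a) ^ 2) / E = (w y) ^ 2 := by
    rw [key y]
    field_simp
    ring
  rw [hform, Real.sqrt_sq (hpos y).le]
end

section
/- Let τ > 0 and let v ∈ C²(ℝ) be 2π-periodic and positive with v''(θ) + v(θ) = τ·v(θ)^{-3} for all θ. Then there exist λ > 0 and α ∈ [0, 2π) such that v(θ) = τ^{1/4}·√( λ²cos²(θ−α) + λ^{-2}sin²(θ−α) ) for all θ. -/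
open Real Set

/-!
Multiplying the equation by `v'` gives the first integral `E = v'² + v² + τ / v²`, and with it
`u = v²` satisfies the linear equation `u'' + 4 u = 2 E`. Hence `v² = E / 2 + R cos (2 (θ - α))`
where evaluating `E` at `θ = 0` gives `R² = (E / 2)² - τ`, that is
`v² = p cos² (θ - α) + q sin² (θ - α)` with `p + q = E` and `p q = τ`. Taking `λ⁴ = p / q`
yields the claimed form.
-/

theorem eq_of_hasDerivAt_zero {f : ℝ → ℝ} (hf : ∀ t, HasDerivAt f 0 t) (x y : ℝ) : f x = f y :=
  is_const_of_deriv_eq_zero (fun t => (hf t).differentiableAt) (fun t => (hf t).deriv) x y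

theorem eq_mul_cos_add_mul_sin_of_hasDerivAt {ω : ℝ} (hω : ω ≠ 0) {w w' : ℝ → ℝ}
    (hw : ∀ t, HasDerivAt w (w' t) t) (hw' : ∀ t, HasDerivAt w' (-(ω ^ 2 * w t)) t) (t : ℝ) :
    w t = w 0 * cos (ω * t) + w' 0 / ω * sin (ω * t) := by
  have hcos : ∀ t, HasDerivAt (fun t => cos (ω * t)) (-sin (ω * t) * ω) t := fun t => by
    simpa using ((hasDerivAt_id t).const_mul ω).cos
  have hsin : ∀ t, HasDerivAt (fun t => sin (ω * t)) (cos (ω * t) * ω) t := fun t => by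
    simpa using ((hasDerivAt_id t).const_mul ω).sin
  -- `(w, w' / ω)` rotated back by the angle `ω t` is a first integral
  have hA : ∀ t, w t * cos (ω * t) - w' t / ω * sin (ω * t) = w 0 := fun t => by
    refine (eq_of_hasDerivAt_zero (f := fun t => w t * cos (ω * t) - w' t / ω * sin (ω * t))
      (fun s => ?_) t 0).trans (by simp)
    refine (((hw s).mul (hcos s)).sub (((hw' s).div_const ω).mul (hsin s))).congr_deriv ?_
    field_simp
    ring
  have hB : ∀ t, w t * sin (ω * t) + w' t / ω * cos (ω * t) = w' 0 / ω := fun t => by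
    refine (eq_of_hasDerivAt_zero (f := fun t => w t * sin (ω * t) + w' t / ω * cos (ω * t))
      (fun s => ?_) t 0).trans (by simp)
    refine (((hw s).mul (hsin s)).add (((hw' s).div_const ω).mul (hcos s))).congr_deriv ?_
    field_simp
    ring
  rw [← hA t, ← hB t]
  linear_combination (w t) * (sin_sq_add_cos_sq (ω * t)).symm

theorem exists_mem_Ico_eq_sqrt_mul_cos_sin (a b : ℝ) :
    ∃ φ ∈ Ico 0 (2 * π), a = √(a ^ 2 + b ^ 2) * cos φ ∧ b = √(a ^ 2 + b ^ 2) * sin φ := by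
  set z : ℂ := a + b * Complex.I
  have hz : ‖z‖ = √(a ^ 2 + b ^ 2) := Complex.norm_add_mul_I a b
  refine ⟨toIcoMod two_pi_pos 0 z.arg, toIcoMod_mem_Ico' _ _, ?_, ?_⟩
  all_goals rw [← self_sub_toIcoDiv_zsmul, zsmul_eq_mul, ← hz]
  · rw [cos_sub_int_mul_two_pi, Complex.norm_mul_cos_arg]; simp [z]
  · rw [sin_sub_int_mul_two_pi, Complex.norm_mul_sin_arg]; simp [z]

theorem sqrt_mul_cos_sq_add_mul_sin_sq {p q : ℝ} (hp : 0 < p) (hq : 0 < q) (x : ℝ) :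
    √(p * cos x ^ 2 + q * sin x ^ 2) = (p * q) ^ ((1 : ℝ) / 4) *
      √(√(√p / √q) ^ 2 * cos x ^ 2 + √(√p / √q) ^ (-2 : ℤ) * sin x ^ 2) := by
  have hfourth : (p * q) ^ ((1 : ℝ) / 4) = √(√p * √q) := by
    rw [← sqrt_mul hp.le, sqrt_eq_rpow, sqrt_eq_rpow, ← rpow_mul (by positivity)]
    norm_num
  rw [hfourth, ← sqrt_mul (by positivity), zpow_neg, zpow_ofNat, sq_sqrt (by positivity)]
  congr 1
  field_simp
  rw [sq_sqrt hp.le, sq_sqrt hq.le]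
  ring

noncomputable def ermakovEnergy (τ : ℝ) (v v' : ℝ → ℝ) (θ : ℝ) : ℝ :=
  v' θ ^ 2 + v θ ^ 2 + τ / v θ ^ 2

section Ermakov

variable {τ : ℝ} {v v' : ℝ → ℝ}

theorem ermakovEnergy_pos (hτ : 0 ≤ τ) {θ : ℝ} (hθ : v θ ≠ 0) : 0 < ermakovEnergy τ v v' θ := by
  unfold ermakovEnergy
  positivity

theorem ermakovEnergy_eq (hv : ∀ θ, HasDerivAt v (v' θ) θ)
    (hv' : ∀ θ, HasDerivAt v' (τ / v θ ^ 3 - v θ) θ) (hne : ∀ θ, v θ ≠ 0) (θ : ℝ) :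
    ermakovEnergy τ v v' θ = ermakovEnergy τ v v' 0 := by
  refine eq_of_hasDerivAt_zero (fun s => ?_) θ 0
  have hs := hne s
  refine ((((hv' s).pow 2).add ((hv s).pow 2)).add
    ((hasDerivAt_const s τ).div ((hv s).pow 2) (pow_ne_zero 2 hs))).congr_deriv ?_
  simp only [Pi.pow_apply]
  field_simp
  ring

theorem sq_sub_half_ermakovEnergy_eq (hv : ∀ θ, HasDerivAt v (v' θ) θ)
    (hv' : ∀ θ, HasDerivAt v' (τ / v θ ^ 3 - v θ) θ) (hne : ∀ θ, v θ ≠ 0) (θ : ℝ) :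
    v θ ^ 2 - ermakovEnergy τ v v' 0 / 2 =
      (v 0 ^ 2 - ermakovEnergy τ v v' 0 / 2) * cos (2 * θ) + v 0 * v' 0 * sin (2 * θ) := by
  set E := ermakovEnergy τ v v' 0
  have hw : ∀ θ, HasDerivAt (fun θ => v θ ^ 2 - E / 2) (2 * v θ * v' θ) θ := fun θ => by
    simpa using ((hv θ).pow 2).sub_const (E / 2)
  have hw' : ∀ θ, HasDerivAt (fun θ => 2 * v θ * v' θ) (-(2 ^ 2 * (v θ ^ 2 - E / 2))) θ := by
    intro θ
    refine (((hv θ).const_mul 2).mul (hv' θ)).congr_deriv ?_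
    have hE : v' θ ^ 2 + v θ ^ 2 + τ / v θ ^ 2 = E := ermakovEnergy_eq hv hv' hne θ
    have hτ : v θ * (τ / v θ ^ 3) = τ / v θ ^ 2 := by
      have := hne θ
      field_simp
    linear_combination 2 * hE + 2 * hτ
  rw [eq_mul_cos_add_mul_sin_of_hasDerivAt two_ne_zero hw hw' θ]
  ring

theorem exists_sq_eq_mul_cos_sq_add_mul_sin_sq (hv : ∀ θ, HasDerivAt v (v' θ) θ)
    (hv' : ∀ θ, HasDerivAt v' (τ / v θ ^ 3 - v θ) θ) (hne : ∀ θ, v θ ≠ 0) :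
    ∃ p q, p + q = ermakovEnergy τ v v' 0 ∧ p * q = τ ∧ ∃ α ∈ Ico 0 (2 * π),
      ∀ θ, v θ ^ 2 = p * cos (θ - α) ^ 2 + q * sin (θ - α) ^ 2 := by
  set E := ermakovEnergy τ v v' 0
  set a := v 0 ^ 2 - E / 2
  set b := v 0 * v' 0
  have hab : a ^ 2 + b ^ 2 = (E / 2) ^ 2 - τ := by
    have := hne 0
    simp only [a, b, E, ermakovEnergy]
    field_simp
    ring
  obtain ⟨φ, ⟨hφ0, hφ⟩, ha, hb⟩ := exists_mem_Ico_eq_sqrt_mul_cos_sin a b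
  set R := √(a ^ 2 + b ^ 2)
  have hR : R ^ 2 = a ^ 2 + b ^ 2 := sq_sqrt (by positivity)
  refine ⟨E / 2 + R, E / 2 - R, by ring, by linear_combination -hR - hab, φ / 2,
    ⟨by linarith, by linarith [pi_pos]⟩, fun θ => ?_⟩
  have hcos : cos (2 * (θ - φ / 2)) = cos (2 * θ) * cos φ + sin (2 * θ) * sin φ := by
    rw [← cos_sub]; ring_nf
  linear_combination sq_sub_half_ermakovEnergy_eq hv hv' hne θ + cos (2 * θ) * ha
    + sin (2 * θ) * hb - R * hcos + R * cos_two_mul' (θ - φ / 2)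
    - E / 2 * cos_sq_add_sin_sq (θ - φ / 2)

end Ermakov

theorem ode_classification_circle_general
    (τ : ℝ) (hτ : 0 < τ) (v : ℝ → ℝ) (hv : ContDiff ℝ 2 v)
    (hpos : ∀ θ, 0 < v θ)
    (hode : ∀ θ, iteratedDeriv 2 v θ + v θ = τ * (v θ) ^ (-3 : ℤ)) :
    ∃ l > (0:ℝ), ∃ α ∈ Ico (0:ℝ) (2 * π), ∀ θ : ℝ,
      v θ = τ ^ ((1 : ℝ)/4) *
        Real.sqrt (l ^ 2 * Real.cos (θ - α) ^ 2 + l ^ (-2 : ℤ) * Real.sin (θ - α) ^ 2) := by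
  have hne : ∀ θ, v θ ≠ 0 := fun θ => (hpos θ).ne'
  have hv₁ : ∀ θ, HasDerivAt v (deriv v θ) θ :=
    fun θ => (hv.differentiable two_ne_zero θ).hasDerivAt
  have hv₂ : ∀ θ, HasDerivAt (deriv v) (τ / v θ ^ 3 - v θ) θ := fun θ => by
    have h := hode θ
    rw [iteratedDeriv_succ, iteratedDeriv_one, zpow_neg, zpow_ofNat, ← div_eq_mul_inv] at h
    exact eq_sub_of_add_eq h ▸ (hv.differentiable_deriv_two θ).hasDerivAt
  obtain ⟨p, q, hsum, hprod, α, hα, hsq⟩ := exists_sq_eq_mul_cos_sq_add_mul_sin_sq hv₁ hv₂ hne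
  obtain ⟨hp, hq⟩ : 0 < p ∧ 0 < q :=
    (pos_and_pos_or_neg_and_neg_of_mul_pos (hprod ▸ hτ)).resolve_right fun h => by
      linarith [hsum ▸ ermakovEnergy_pos (v' := deriv v) hτ.le (hne 0)]
  refine ⟨√(√p / √q), by positivity, α, hα, fun θ => ?_⟩
  rw [← hprod, ← sqrt_mul_cos_sq_add_mul_sin_sq hp hq, ← hsq, sqrt_sq (hpos θ).le]

/-- Classification of the positive `2π`-periodic solutions of `v'' + v = τ·v⁻³`
(the steady states in Theorem 1 of the paper). -/
theorem ode_classification_circle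
    (τ : ℝ) (hτ : 0 < τ) (v : ℝ → ℝ) (hv : ContDiff ℝ 2 v)
    (hper : ∀ θ : ℝ, v (θ + 2 * π) = v θ)
    (hpos : ∀ θ, 0 < v θ)
    (hode : ∀ θ, iteratedDeriv 2 v θ + v θ = τ * (v θ) ^ (-3 : ℤ)) :
    ∃ l > (0:ℝ), ∃ α ∈ Ico (0:ℝ) (2 * π), ∀ θ : ℝ,
      v θ = τ ^ ((1 : ℝ)/4) *
        Real.sqrt (l ^ 2 * Real.cos (θ - α) ^ 2 + l ^ (-2 : ℤ) * Real.sin (θ - α) ^ 2) :=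
  ode_classification_circle_general τ hτ v hv hpos hode
end
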